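/- Let A be an m×m matrix with real entries and let ξ_1, …, ξ_m be the roots in ℂ of its characteristic polynomial, counted with multiplicity. For every real δ with 0 < δ < π/2 and every N ∈ ℕ, there exists an integer n ≥ N such that tr(A^n) ≥ cos(δ) · (|ξ_1|^n + ⋯ + |ξ_m|^n). -/

import Mathlib

/-!
Over `ℂ` the roots of the characteristic polynomial of `A ^ n` are the `n`-th powers of those
of `A`, because `det (p A) = ∏ j, p (ξ j)` for every polynomial `p`; hence
`tr (A ^ n) = ∑ j, Re (ξ j ^ n) = ∑ j, |ξ j| ^ n cos (n arg ξ j)`. It remains to find a large `n`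
for which all the angles `n arg ξ j` lie within `δ` of `0` modulo `2π`. This is recurrence on the
compact torus of angles: a subsequence of `k • θ` converges, so two far-apart terms are close, and
their difference is a large multiple of `θ` close to `0`.
-/

open Filter Polynomial

instance Real.Angle.instCompactSpace : CompactSpace Real.Angle :=
  haveI : Fact (0 < 2 * Real.pi) := ⟨Real.two_pi_pos⟩
  inferInstanceAs (CompactSpace (AddCircle (2 * Real.pi)))

theorem Real.Angle.norm_eq_abs_toReal (θ : Real.Angle) : ‖θ‖ = |θ.toReal| := by
  conv_lhs => rw [← θ.coe_toReal]
  refine (AddCircle.norm_coe_eq_abs_iff (p := 2 * Real.pi) Real.two_pi_pos.ne').2 ?_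
  rw [abs_of_pos Real.two_pi_pos]
  linarith [θ.abs_toReal_le_pi]

theorem Real.Angle.cos_le_cos_of_norm_le {θ : Real.Angle} {δ : ℝ} (hθ : ‖θ‖ ≤ δ)
    (hδ : δ ≤ Real.pi) : Real.cos δ ≤ θ.cos := by
  rw [← θ.cos_toReal, ← Real.cos_abs θ.toReal, ← θ.norm_eq_abs_toReal]
  exact Real.cos_le_cos_of_nonneg_of_le_pi (norm_nonneg θ) hδ hθ

theorem Complex.re_pow_eq_norm_pow_mul_cos (z : ℂ) (n : ℕ) :
    (z ^ n).re = ‖z‖ ^ n * (n • (z.arg : Real.Angle)).cos := by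
  rw [← Complex.arg_pow_coe_angle, Real.Angle.cos_coe, ← norm_pow, Complex.norm_mul_cos_arg]

theorem frequently_norm_nsmul_lt {G : Type*} [SeminormedAddCommGroup G] [CompactSpace G]
    (g : G) {ε : ℝ} (hε : 0 < ε) : ∃ᶠ n : ℕ in atTop, ‖n • g‖ < ε := by
  obtain ⟨_, φ, hφ, hlim⟩ := CompactSpace.tendsto_subseq fun k : ℕ => k • g
  obtain ⟨K, hK⟩ := Metric.cauchySeq_iff.1 hlim.cauchySeq ε hε
  refine frequently_atTop.2 fun N => ⟨φ (N + K) - φ K, ?_, ?_⟩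
  · have := hφ.add_le_nat N K
    omega
  rw [sub_nsmul g (hφ.monotone (Nat.le_add_left K N)), ← sub_eq_add_neg, ← dist_eq_norm]
  exact hK _ (Nat.le_add_left K N) _ le_rfl

namespace Matrix

variable {ι K : Type*} [Fintype ι] [DecidableEq ι] [Field K] [IsAlgClosed K]

theorem card_roots_charpoly (B : Matrix ι ι K) : B.charpoly.roots.card = Fintype.card ι := by
  rw [IsAlgClosed.card_roots_eq_natDegree, charpoly_natDegree_eq_dim]

theorem det_sub_algebraMap_eq_prod_roots_charpoly (B : Matrix ι ι K) (a : K) :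
    (B - algebraMap K _ a).det = (B.charpoly.roots.map (· - a)).prod := by
  rw [← neg_sub, det_neg, show algebraMap K (Matrix ι ι K) a = scalar ι a from rfl,
    ← eval_charpoly, (IsAlgClosed.splits B.charpoly).eval_eq_prod_roots_of_monic B.charpoly_monic,
    ← B.card_roots_charpoly, ← Multiset.card_map (a - ·), ← Multiset.prod_map_neg,
    Multiset.map_map]
  simp_rw [Function.comp_def, neg_sub]

theorem det_aeval_eq_prod_roots_charpoly (B : Matrix ι ι K) (p : K[X]) :
    (aeval B p).det = (B.charpoly.roots.map p.eval).prod := by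
  -- `p ↦ det (aeval B p)` is multiplicative, so it suffices to compare the factors of the
  -- splitting `p = C c * ∏ (X - C a)`.
  let detAeval : K[X] →* K := detMonoidHom.comp (aeval B).toMonoidHom
  change detAeval p = _
  conv_lhs => rw [(IsAlgClosed.splits p).eq_prod_roots]
  simp_rw [(IsAlgClosed.splits p).eval_eq_prod_roots, Multiset.prod_map_mul, map_mul,
    map_multiset_prod, Multiset.map_map, Function.comp_def]
  have hC (c : K) : detAeval (C c) = c ^ Fintype.card ι := by
    simp [detAeval, algebraMap_eq_diagonal, Pi.algebraMap_def]
  have hlinear (a : K) : detAeval (X - C a) = (B.charpoly.roots.map (· - a)).prod := by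
    simp [detAeval, ← det_sub_algebraMap_eq_prod_roots_charpoly]
  rw [hC, Multiset.map_congr rfl fun a _ => hlinear a, Multiset.prod_map_prod_map,
    Multiset.map_const', Multiset.prod_replicate, card_roots_charpoly]

theorem charpoly_pow_eq_prod_roots_charpoly (B : Matrix ι ι K) (n : ℕ) :
    (B ^ n).charpoly = ((B.charpoly.roots.map (· ^ n)).map (X - C ·)).prod := by
  refine Polynomial.funext fun x => ?_
  have hscalar : scalar ι x - B ^ n = aeval B (C x - X ^ n) := by
    simp [algebraMap_eq_diagonal, Pi.algebraMap_def]
  rw [eval_charpoly, hscalar, det_aeval_eq_prod_roots_charpoly, eval_multiset_prod,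
    Multiset.map_map, Multiset.map_map]
  simp [Function.comp_def]

theorem trace_pow_eq_sum_roots_charpoly (B : Matrix ι ι K) (n : ℕ) :
    (B ^ n).trace = (B.charpoly.roots.map (· ^ n)).sum := by
  rw [trace_eq_sum_roots_charpoly, charpoly_pow_eq_prod_roots_charpoly,
    roots_multiset_prod_X_sub_C]

end Matrix

/-- For a real `m × m` matrix `A` whose characteristic polynomial has complex roots
`ξ 1, …, ξ m` counted with multiplicity, for every `0 < δ < π/2` and `N`, there is
`n ≥ N` with `tr (A ^ n) ≥ cos δ * ∑ j, |ξ j| ^ n`. -/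
theorem trace_power_lower_bound {m : ℕ} (A : Matrix (Fin m) (Fin m) ℝ) (ξ : Fin m → ℂ)
    (hξ : (A.charpoly.map (algebraMap ℝ ℂ)).roots = Multiset.map ξ Finset.univ.val)
    (δ : ℝ) (hδ0 : 0 < δ) (hδ : δ < Real.pi / 2) (N : ℕ) :
    ∃ n : ℕ, N ≤ n ∧ Real.cos δ * ∑ j : Fin m, ‖ξ j‖ ^ n ≤ (A ^ n).trace := by
  have htrace (n : ℕ) : (A ^ n).trace = ∑ j, (ξ j ^ n).re := by
    have h := (A.map (algebraMap ℝ ℂ)).trace_pow_eq_sum_roots_charpoly n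
    rw [Matrix.charpoly_map, hξ, Multiset.map_map, ← Finset.sum_eq_multiset_sum, ← Matrix.map_pow,
      ← AddMonoidHom.map_trace] at h
    simpa using congrArg Complex.re h
  obtain ⟨n, hNn, hn⟩ := (frequently_norm_nsmul_lt (fun j => ((ξ j).arg : Real.Angle))
    hδ0).forall_exists_of_atTop N
  refine ⟨n, hNn, ?_⟩
  rw [htrace, Finset.mul_sum]
  gcongr with j
  rw [Complex.re_pow_eq_norm_pow_mul_cos, mul_comm]
  gcongr
  exact Real.Angle.cos_le_cos_of_norm_le ((norm_le_pi_norm _ j).trans hn.le) (by linarith)
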